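/- For every n ∈ ℕ, the fragments RPL(⊙)_{≤n} and LΠ½(→_P⁻)_{≤n} have the same expressive power: for each formula of RPL(⊙)_{≤n} there exists an equivalent formula of LΠ½(→_P⁻)_{≤n}, and for each formula of LΠ½(→_P⁻)_{≤n} there exists an equivalent formula of RPL(⊙)_{≤n}. -/

import Mathlib

/-- Terms of ℚ[ReLU, x_i]_{i∈ℕ}; variables are indexed by ℕ. -/
inductive RTerm : Type where
  | const : ℚ → RTerm
  | var : ℕ → RTerm
  | add : RTerm → RTerm → RTerm
  | mul : RTerm → RTerm → RTerm
  | relu : RTerm → RTerm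

/-- Value of a term under an evaluation map `E : ℕ → ℝ`. -/
def RTerm.eval (E : ℕ → ℝ) : RTerm → ℝ
  | .const r => (r : ℝ)
  | .var x => E x
  | .add t t' => t.eval E + t'.eval E
  | .mul t t' => t.eval E * t'.eval E
  | .relu t => max 0 (t.eval E)

/-- Degree of a term. -/
def RTerm.deg : RTerm → ℕ
  | .const _ => 0
  | .var _ => 1
  | .add t t' => max t.deg t'.deg
  | .mul t t' => t.deg + t'.deg
  | .relu t => t.deg

/-- Subterms of a term. -/
def RTerm.subt : RTerm → List RTerm
  | .const r => [.const r]
  | .var x => [.var x]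
  | .add t t' => t.subt ++ t'.subt ++ [.add t t']
  | .mul t t' => t.subt ++ t'.subt ++ [.mul t t']
  | .relu t => t.subt ++ [.relu t]

/-- Proto-neurons. -/
inductive RTerm.ProtoNeuron : RTerm → Prop where
  | const (r : ℚ) : RTerm.ProtoNeuron (.const r)
  | var (x : ℕ) : RTerm.ProtoNeuron (.var x)
  | add {t t'} : RTerm.ProtoNeuron t → RTerm.ProtoNeuron t' → RTerm.ProtoNeuron (.add t t')
  | mul {t t'} : RTerm.ProtoNeuron t → RTerm.ProtoNeuron t' → t.deg + t'.deg ≤ 1 →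
      RTerm.ProtoNeuron (.mul t t')
  | relu {t} : RTerm.ProtoNeuron t → RTerm.ProtoNeuron (.relu t)

/-- `ReLU (w₁·n₁ + (w₂·n₂ + (⋯ + b)))`. -/
def layerNeuron (ws : List (ℚ × RTerm)) (b : ℚ) : RTerm :=
  .relu (ws.foldr (fun wt acc => .add (.mul (.const wt.1) wt.2) acc) (.const b))

/-- Rational-parameter ReLU-activated neural networks of a given depth,
identified with the tuples of their output neurons. -/
inductive IsNN : ℕ → List RTerm → Prop where
  | input (ys : List ℕ) : ys ≠ [] → ys.Nodup → IsNN 0 (ys.map RTerm.var)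
  | layer {d : ℕ} {prev : List RTerm} (hprev : IsNN d prev)
      (params : List (List ℚ × ℚ)) (hne : params ≠ [])
      (hlen : ∀ p ∈ params, p.1.length = prev.length) :
      IsNN (d + 1) (params.map fun p => layerNeuron (p.1.zip prev) p.2)

/-- A neuron is a component of some neural network. -/
def IsNeuron (t : RTerm) : Prop := ∃ d N, IsNN d N ∧ t ∈ N

/-- Formulae of RPL(⊙): truth constants r̄ for r ∈ ℚ ∩ [0,1], proposition
symbols, →_L and ⊙. -/
inductive RPLForm : Type where
  | const : {r : ℚ // 0 ≤ r ∧ r ≤ 1} → RPLForm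
  | prop : ℕ → RPLForm
  | impL : RPLForm → RPLForm → RPLForm
  | conj : RPLForm → RPLForm → RPLForm

/-- A valuation assigns to every proposition symbol a value in [0,1]. -/
def IsValuation (V : ℕ → ℝ) : Prop := ∀ p, 0 ≤ V p ∧ V p ≤ 1

/-- Truth value of an RPL(⊙)-formula under a valuation. -/
def RPLForm.val (V : ℕ → ℝ) : RPLForm → ℝ
  | .const r => (r.1 : ℝ)
  | .prop p => V p
  | .impL φ ψ => min 1 (1 - φ.val V + ψ.val V)
  | .conj φ ψ => φ.val V * ψ.val V

/-- Formulae with no proposition symbols. -/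
def RPLForm.propFree : RPLForm → Prop
  | .const _ => True
  | .prop _ => False
  | .impL φ ψ => φ.propFree ∧ ψ.propFree
  | .conj φ ψ => φ.propFree ∧ ψ.propFree

/-- RPL: the ⊙-free fragment of RPL(⊙). -/
def RPLForm.noConj : RPLForm → Prop
  | .const _ => True
  | .prop _ => True
  | .impL φ ψ => φ.noConj ∧ ψ.noConj
  | .conj _ _ => False

/-- Łukasiewicz logic: the only truth constant is 0̄ and there is no ⊙. -/
def RPLForm.isLuk : RPLForm → Prop
  | .const r => r.1 = 0
  | .prop _ => True
  | .impL φ ψ => φ.isLuk ∧ ψ.isLuk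
  | .conj _ _ => False

/-- The fragment RPL(⊙)_{≤ n}. -/
inductive RPLForm.InFrag : ℕ → RPLForm → Prop where
  | propfree {n φ} : RPLForm.propFree φ → RPLForm.InFrag n φ
  | prop {n} (p : ℕ) : RPLForm.InFrag (n + 1) (.prop p)
  | up {n φ} : RPLForm.InFrag n φ → RPLForm.InFrag (n + 1) φ
  | conj {n i j α β} : RPLForm.InFrag i α → RPLForm.InFrag j β → i + j ≤ n + 1 →
      RPLForm.InFrag (n + 1) (.conj α β)
  | impL {n φ ψ} : RPLForm.InFrag (n + 1) φ → RPLForm.InFrag (n + 1) ψ →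
      RPLForm.InFrag (n + 1) (.impL φ ψ)

/-- Formulae of LΠ½. -/
inductive LPiForm : Type where
  | zero : LPiForm
  | half : LPiForm
  | prop : ℕ → LPiForm
  | impL : LPiForm → LPiForm → LPiForm
  | conj : LPiForm → LPiForm → LPiForm
  | impP : LPiForm → LPiForm → LPiForm

/-- Truth value of an LΠ½-formula under a valuation. -/
noncomputable def LPiForm.val (V : ℕ → ℝ) : LPiForm → ℝ
  | .zero => 0
  | .half => 1 / 2
  | .prop p => V p
  | .impL φ ψ => min 1 (1 - φ.val V + ψ.val V)
  | .conj φ ψ => φ.val V * ψ.val V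
  | .impP φ ψ => if φ.val V ≤ ψ.val V then 1 else ψ.val V / φ.val V

/-- LΠ½-formulae with no proposition symbols (LΠ½_{≤0}). -/
def LPiForm.propFree : LPiForm → Prop
  | .zero => True
  | .half => True
  | .prop _ => False
  | .impL φ ψ => φ.propFree ∧ ψ.propFree
  | .conj φ ψ => φ.propFree ∧ ψ.propFree
  | .impP φ ψ => φ.propFree ∧ ψ.propFree

/-- LΠ½(→_P⁻): no proposition symbols in the scope of →_P. -/
inductive LPiForm.InPF : LPiForm → Prop where
  | base {φ} : LPiForm.propFree φ → LPiForm.InPF φ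
  | prop (p : ℕ) : LPiForm.InPF (.prop p)
  | impL {φ ψ} : LPiForm.InPF φ → LPiForm.InPF ψ → LPiForm.InPF (.impL φ ψ)
  | conj {φ ψ} : LPiForm.InPF φ → LPiForm.InPF ψ → LPiForm.InPF (.conj φ ψ)

/-- LΠ½(⊙⁻, →_P⁻): no proposition symbols in the scope of ⊙ or →_P. -/
inductive LPiForm.InPFF : LPiForm → Prop where
  | base {φ} : LPiForm.propFree φ → LPiForm.InPFF φ
  | prop (p : ℕ) : LPiForm.InPFF (.prop p)
  | impL {φ ψ} : LPiForm.InPFF φ → LPiForm.InPFF ψ → LPiForm.InPFF (.impL φ ψ)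

/-- The fragment LΠ½(→_P⁻)_{≤ n}. -/
inductive LPiForm.InFragPF : ℕ → LPiForm → Prop where
  | propfree {n φ} : LPiForm.propFree φ → LPiForm.InFragPF n φ
  | prop {n} (p : ℕ) : LPiForm.InFragPF (n + 1) (.prop p)
  | up {n φ} : LPiForm.InFragPF n φ → LPiForm.InFragPF (n + 1) φ
  | conj {n i j α β} : LPiForm.InFragPF i α → LPiForm.InFragPF j β → i + j ≤ n + 1 →
      LPiForm.InFragPF (n + 1) (.conj α β)
  | impL {n φ ψ} : LPiForm.InFragPF (n + 1) φ → LPiForm.InFragPF (n + 1) ψ →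
      LPiForm.InFragPF (n + 1) (.impL φ ψ)

/-- scale_k(x) = (k + x)/(2k). -/
noncomputable def scaleK (k x : ℝ) : ℝ := (k + x) / (2 * k)

/-- Equivalence of a term and an RPL(⊙)-formula (the bijection p ↦ x_p is
the identity on ℕ). -/
def TermFormEquiv (t : RTerm) (φ : RPLForm) : Prop :=
  ∀ (E V : ℕ → ℝ), IsValuation V → (∀ x, E x = V x) → t.eval E = φ.val V

/-- (i,k)-equivalence of a formula to a term. -/
def IKEquiv (i k : ℝ) (φ : RPLForm) (t : RTerm) : Prop :=
  ∀ E : ℕ → ℝ, (∀ x, -i ≤ E x ∧ E x ≤ i) →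
    φ.val (fun p => scaleK k (E p)) = scaleK k (t.eval E)

/-- k-equivalence of formulae. -/
def KEquiv (k : ℝ) (ψ φ : RPLForm) : Prop :=
  ∀ V V' : ℕ → ℝ, IsValuation V → IsValuation V' → (∀ p, V' p = scaleK k (V p)) →
    ψ.val V' = scaleK k (φ.val V)

/-- Equivalence of terms. -/
def TermEquiv (t t' : RTerm) : Prop := ∀ E : ℕ → ℝ, t.eval E = t'.eval E

/-- [0,1]-equivalence of terms. -/
def TermEquiv01 (t t' : RTerm) : Prop :=
  ∀ E : ℕ → ℝ, (∀ x, 0 ≤ E x ∧ E x ≤ 1) → t.eval E = t'.eval E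

/-- Equivalence of an RPL(⊙)-formula and an LΠ½-formula. -/
def RLEquiv (φ : RPLForm) (ψ : LPiForm) : Prop :=
  ∀ V : ℕ → ℝ, IsValuation V → φ.val V = ψ.val V

/-- The truth constant 0̄. -/
def RPLForm.zeroC : RPLForm := .const ⟨0, by norm_num⟩

/-- ¬_L φ := φ →_L 0̄. -/
def RPLForm.negL (φ : RPLForm) : RPLForm := φ.impL RPLForm.zeroC

/-- φ ⊕ ψ := ¬_L φ →_L ψ. -/
def RPLForm.oplus (φ ψ : RPLForm) : RPLForm := φ.negL.impL ψ

/-- φ ⊗ ψ := ¬_L (φ →_L ¬_L ψ). -/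
def RPLForm.otimes (φ ψ : RPLForm) : RPLForm := (φ.impL ψ.negL).negL

/-- φ ⊖ ψ := φ ⊗ ¬_L ψ  (semantics: max{0, V(φ) − V(ψ)}). -/
def RPLForm.ominus (φ ψ : RPLForm) : RPLForm := φ.otimes ψ.negL

/-- φ ⊕' ψ := (φ ⊖ ¼̄) ⊕ (ψ ⊖ ¼̄). -/
def RPLForm.oplus' (φ ψ : RPLForm) : RPLForm :=
  (φ.ominus (.const ⟨1/4, by norm_num⟩)).oplus (ψ.ominus (.const ⟨1/4, by norm_num⟩))

/-- The iterated sum ⨀_n. -/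
def RPLForm.bigOplus : ℕ → RPLForm → RPLForm
  | 0, _ => RPLForm.zeroC
  | n + 1, φ => (RPLForm.bigOplus n φ).oplus φ

/-- The iterated operator ⨀'_n; `Nat.clog 2 n` is the least j with n ≤ 2^j. -/
def RPLForm.bigOplus' : ℕ → RPLForm → RPLForm
  | 0, _ => .const ⟨1/2, by norm_num⟩
  | 1, φ => φ
  | n + 2, φ =>
      RPLForm.oplus' (RPLForm.bigOplus' (2 ^ (Nat.clog 2 (n + 2) - 1)) φ)
        (RPLForm.bigOplus' ((n + 2) - 2 ^ (Nat.clog 2 (n + 2) - 1)) φ)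
  termination_by n _ => n
  decreasing_by
  · have := Nat.pow_pred_clog_lt_self (b := 2) (x := n + 2) (by norm_num) (by omega)
    simp only [Nat.pred_eq_sub_one] at this
    first | exact this | omega
  · have h1 : 0 < 2 ^ (Nat.clog 2 (n + 2) - 1) := Nat.pow_pos (by norm_num)
    omega

theorem inv2k_mem (k : ℕ) (hk : 1 ≤ k) : 0 ≤ (1 / (2 * (k : ℚ))) ∧ (1 / (2 * (k : ℚ))) ≤ 1 := by
  have h : (1 : ℚ) ≤ (k : ℚ) := by exact_mod_cast hk
  constructor
  · positivity
  · rw [div_le_one (by linarith)]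
    linarith

/-- φ ⊙^k ψ := ⨀_k((⨀_2(φ ⊙ ψ) ⊕ (1/(2k))̄) ⊖ (φ ⊕' ψ)). -/
def RPLForm.odotPow (k : ℕ) (hk : 1 ≤ k) (φ ψ : RPLForm) : RPLForm :=
  RPLForm.bigOplus k
    (((RPLForm.bigOplus 2 (φ.conj ψ)).oplus
        (.const ⟨1 / (2 * (k : ℚ)), inv2k_mem k hk⟩)).ominus (φ.oplus' ψ))

/-! ### Auxiliary material for STATEMENT 4 -/

/-- Rational value of a (prop-free) LΠ½-formula, with props valued 0. -/
def LPiForm.qval : LPiForm → ℚ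
  | .zero => 0
  | .half => 1/2
  | .prop _ => 0
  | .impL φ ψ => min 1 (1 - φ.qval + ψ.qval)
  | .conj φ ψ => φ.qval * ψ.qval
  | .impP φ ψ => if φ.qval ≤ ψ.qval then 1 else ψ.qval / φ.qval

lemma LPiForm.qval_bounds (φ : LPiForm) (h : φ.propFree) :
    0 ≤ φ.qval ∧ φ.qval ≤ 1 := by
  induction φ with
  | zero => simp [qval]
  | half => norm_num [qval]
  | prop p => exact absurd h (by simp [propFree])
  | impL φ ψ ih1 ih2 =>
      obtain ⟨h1, h2⟩ := h
      obtain ⟨a1, a2⟩ := ih1 h1; obtain ⟨b1, b2⟩ := ih2 h2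
      constructor
      · simp only [qval, le_min_iff]; constructor <;> linarith
      · exact min_le_left _ _
  | conj φ ψ ih1 ih2 =>
      obtain ⟨h1, h2⟩ := h
      obtain ⟨a1, a2⟩ := ih1 h1; obtain ⟨b1, b2⟩ := ih2 h2
      constructor
      · exact mul_nonneg a1 b1
      · calc φ.qval * ψ.qval ≤ 1 * 1 := by
              exact mul_le_mul a2 b2 b1 (by norm_num)
          _ = 1 := by norm_num
  | impP φ ψ ih1 ih2 =>
      obtain ⟨h1, h2⟩ := h
      obtain ⟨a1, a2⟩ := ih1 h1; obtain ⟨b1, b2⟩ := ih2 h2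
      simp only [qval]
      split_ifs with hle
      · norm_num
      · push_neg at hle
        constructor
        · exact div_nonneg b1 (by linarith)
        · rw [div_le_one (by linarith)]; linarith

lemma LPiForm.val_eq_qval (φ : LPiForm) (h : φ.propFree) (V : ℕ → ℝ) :
    φ.val V = (φ.qval : ℝ) := by
  induction φ with
  | zero => simp [val, qval]
  | half => norm_num [val, qval]
  | prop p => exact absurd h (by simp [propFree])
  | impL φ ψ ih1 ih2 =>
      obtain ⟨h1, h2⟩ := h
      simp only [val, qval, ih1 h1, ih2 h2]
      push_cast [Rat.cast_min]
      ring_nf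
  | conj φ ψ ih1 ih2 =>
      obtain ⟨h1, h2⟩ := h
      simp only [val, qval, ih1 h1, ih2 h2]
      push_cast; ring
  | impP φ ψ ih1 ih2 =>
      obtain ⟨h1, h2⟩ := h
      simp only [val, qval, ih1 h1, ih2 h2]
      split_ifs with hc1 hc2 hc2
      · norm_num
      · exact absurd (by exact_mod_cast hc1) hc2
      · exact absurd (by exact_mod_cast hc2) hc1
      · push_cast; ring

/-- Clamp a rational to [0,1]. -/
def clampQ (r : ℚ) : {r : ℚ // 0 ≤ r ∧ r ≤ 1} :=
  ⟨max 0 (min 1 r), le_max_left _ _, max_le (by norm_num) (min_le_left _ _)⟩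

lemma clampQ_eq (r : ℚ) (h0 : 0 ≤ r) (h1 : r ≤ 1) : (clampQ r).1 = r := by
  simp [clampQ, min_eq_right h1, max_eq_right h0]

/-- Translation LΠ½ → RPL(⊙); impP-nodes are replaced by constants. -/
def LPiForm.toRPL : LPiForm → RPLForm
  | .zero => .const ⟨0, by norm_num⟩
  | .half => .const ⟨1/2, by norm_num⟩
  | .prop p => .prop p
  | .impL φ ψ => .impL φ.toRPL ψ.toRPL
  | .conj φ ψ => .conj φ.toRPL ψ.toRPL
  | .impP φ ψ => .const (clampQ (LPiForm.qval (.impP φ ψ)))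

lemma LPiForm.toRPL_propFree (φ : LPiForm) (h : φ.propFree) :
    φ.toRPL.propFree := by
  induction φ with
  | zero => trivial
  | half => trivial
  | prop p => exact absurd h (by simp [propFree])
  | impL φ ψ ih1 ih2 => exact ⟨ih1 h.1, ih2 h.2⟩
  | conj φ ψ ih1 ih2 => exact ⟨ih1 h.1, ih2 h.2⟩
  | impP φ ψ _ _ => trivial

lemma LPiForm.toRPL_val_propFree (φ : LPiForm) (h : φ.propFree) (V : ℕ → ℝ) :
    φ.toRPL.val V = φ.val V := by
  induction φ with
  | zero => simp [toRPL, RPLForm.val, val]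
  | half => norm_num [toRPL, RPLForm.val, val]
  | prop p => exact absurd h (by simp [propFree])
  | impL φ ψ ih1 ih2 => simp [toRPL, RPLForm.val, val, ih1 h.1, ih2 h.2]
  | conj φ ψ ih1 ih2 => simp [toRPL, RPLForm.val, val, ih1 h.1, ih2 h.2]
  | impP φ ψ _ _ =>
      have hb := LPiForm.qval_bounds _ h
      simp only [toRPL, RPLForm.val]
      rw [clampQ_eq _ hb.1 hb.2, ← LPiForm.val_eq_qval _ h V]

lemma LPiForm.toRPL_frag {n : ℕ} {ψ : LPiForm} (h : LPiForm.InFragPF n ψ) :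
    RPLForm.InFrag n ψ.toRPL ∧ ∀ V, ψ.toRPL.val V = ψ.val V := by
  induction h with
  | propfree hpf =>
      exact ⟨.propfree (LPiForm.toRPL_propFree _ hpf),
        fun V => LPiForm.toRPL_val_propFree _ hpf V⟩
  | prop p => exact ⟨.prop p, fun V => rfl⟩
  | up _ ih => exact ⟨.up ih.1, ih.2⟩
  | conj _ _ hij ih1 ih2 =>
      exact ⟨.conj ih1.1 ih2.1 hij,
        fun V => by simp [toRPL, RPLForm.val, val, ih1.2 V, ih2.2 V]⟩
  | impL _ _ ih1 ih2 =>
      exact ⟨.impL ih1.1 ih2.1,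
        fun V => by simp [toRPL, RPLForm.val, val, ih1.2 V, ih2.2 V]⟩

/-- The constant 1 in LΠ½. -/
def LPiForm.lone : LPiForm := .impL .zero .zero

/-- (1/2)^m in LΠ½. -/
def LPiForm.hpow : ℕ → LPiForm
  | 0 => LPiForm.lone
  | m + 1 => .conj .half (LPiForm.hpow m)

/-- Łukasiewicz k-fold sum in LΠ½. -/
def LPiForm.nsumL : ℕ → LPiForm → LPiForm
  | 0, _ => .zero
  | k + 1, φ => .impL (.impL (LPiForm.nsumL k φ) .zero) φ

lemma LPiForm.hpow_propFree (m : ℕ) : (LPiForm.hpow m).propFree := by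
  induction m with
  | zero => exact ⟨trivial, trivial⟩
  | succ m ih => exact ⟨trivial, ih⟩

lemma LPiForm.nsumL_propFree (k : ℕ) (φ : LPiForm) (h : φ.propFree) :
    (LPiForm.nsumL k φ).propFree := by
  induction k with
  | zero => trivial
  | succ k ih => exact ⟨⟨ih, trivial⟩, h⟩

lemma LPiForm.hpow_val (m : ℕ) (V : ℕ → ℝ) :
    (LPiForm.hpow m).val V = (1/2 : ℝ) ^ m := by
  induction m with
  | zero => norm_num [hpow, lone, val]
  | succ m ih => simp [hpow, val, ih]; ring

lemma LPiForm.nsumL_val (k : ℕ) (φ : LPiForm) (V : ℕ → ℝ)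
    (h0 : 0 ≤ φ.val V) (h1 : φ.val V ≤ 1) :
    (LPiForm.nsumL k φ).val V = min 1 (k * φ.val V) := by
  induction k with
  | zero => simp [nsumL, val]
  | succ k ih =>
      set v : ℝ := φ.val V with hv
      simp only [nsumL, val, ih, ← hv, add_zero]
      have hm : min (1:ℝ) ((k:ℝ) * v) ≤ 1 := min_le_left _ _
      have hm0 : (0:ℝ) ≤ min 1 ((k:ℝ) * v) := le_min (by norm_num) (by positivity)
      rw [show min (1:ℝ) (1 - min 1 ((k:ℝ) * v)) = 1 - min 1 ((k:ℝ) * v) from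
        min_eq_right (by linarith)]
      have hcast : ((k:ℝ) + 1) = ((k + 1 : ℕ) : ℝ) := by push_cast; ring
      rcases le_or_gt 1 ((k : ℝ) * v) with hk | hk
      · rw [min_eq_left hk]
        have h2 : (1:ℝ) ≤ ((k:ℝ) + 1) * v := by nlinarith
        rw [hcast] at h2
        rw [min_eq_left h2, show (1:ℝ) - (1 - 1) + v = 1 + v from by ring,
          min_eq_left (by linarith)]
      · rw [min_eq_right hk.le,
          show (1:ℝ) - (1 - (k:ℝ) * v) + v = ((k:ℝ) + 1) * v from by ring, hcast]

/-- An LΠ½-formula with constant value a given rational r ∈ [0,1]. -/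
def LPiForm.ofRat (r : ℚ) : LPiForm :=
  .impP (LPiForm.nsumL r.den (LPiForm.hpow r.den))
    (LPiForm.nsumL r.num.toNat (LPiForm.hpow r.den))

lemma LPiForm.ofRat_propFree (r : ℚ) : (LPiForm.ofRat r).propFree :=
  ⟨LPiForm.nsumL_propFree _ _ (LPiForm.hpow_propFree _),
   LPiForm.nsumL_propFree _ _ (LPiForm.hpow_propFree _)⟩

lemma LPiForm.ofRat_val (r : ℚ) (h0 : 0 ≤ r) (h1 : r ≤ 1) (V : ℕ → ℝ) :
    (LPiForm.ofRat r).val V = (r : ℝ) := by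
  set q : ℕ := r.den with hq
  set p : ℕ := r.num.toNat with hp
  have hqpos : 0 < q := r.pos
  have hnn : (0:ℤ) ≤ r.num := Rat.num_nonneg.mpr h0
  have hnum : (r.num : ℚ) = (p : ℚ) := by
    rw [hp]; exact_mod_cast (Int.toNat_of_nonneg hnn).symm
  have hpq : p ≤ q := by
    have hd : (r.num : ℚ) ≤ (r.den : ℚ) := by
      rw [← Rat.num_div_den r] at h1
      exact (div_le_one (by exact_mod_cast r.pos)).mp h1
    have : r.num ≤ (r.den : ℤ) := by exact_mod_cast hd
    omega
  have hq2 : q < 2 ^ q := Nat.lt_two_pow_self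
  set v : ℝ := (1/2 : ℝ) ^ q with hv
  have hvpos : 0 < v := by positivity
  have hv1 : v ≤ 1 := by
    apply pow_le_one₀ <;> norm_num
  have hhv : (LPiForm.hpow q).val V = v := LPiForm.hpow_val q V
  have hqa : (q : ℝ) * v ≤ 1 := by
    have h2 : (q : ℝ) ≤ 2 ^ q := by exact_mod_cast hq2.le
    rw [hv, div_pow, one_pow, mul_one_div, div_le_one (by positivity)]
    exact h2
  have hpa : (p : ℝ) * v ≤ 1 := by
    have : (p : ℝ) * v ≤ (q : ℝ) * v := by
      apply mul_le_mul_of_nonneg_right _ hvpos.le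
      exact_mod_cast hpq
    linarith
  have e1 : (LPiForm.nsumL q (LPiForm.hpow q)).val V = (q : ℝ) * v := by
    rw [LPiForm.nsumL_val _ _ _ (by rw [hhv]; exact hvpos.le) (by rw [hhv]; exact hv1),
      hhv, min_eq_right hqa]
  have e2 : (LPiForm.nsumL p (LPiForm.hpow q)).val V = (p : ℝ) * v := by
    rw [LPiForm.nsumL_val _ _ _ (by rw [hhv]; exact hvpos.le) (by rw [hhv]; exact hv1),
      hhv, min_eq_right hpa]
  have hr : (r : ℝ) = (p : ℝ) / (q : ℝ) := by
    rw [show ((r:ℚ) : ℝ) = ((r.num : ℚ) : ℝ) / ((r.den : ℚ) : ℝ) by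
      push_cast
      rw [Rat.cast_def]]
    rw [hnum]
    push_cast
    rfl
  simp only [LPiForm.ofRat, LPiForm.val, e1, e2, ← hq, ← hp]
  split_ifs with hc
  · have hqp : q ≤ p := by
      by_contra hcon
      push_neg at hcon
      have : (p : ℝ) * v < (q : ℝ) * v := by
        apply mul_lt_mul_of_pos_right _ hvpos
        exact_mod_cast hcon
      linarith
    have : p = q := le_antisymm hpq hqp
    rw [hr, this]
    field_simp
  · rw [hr]
    rw [mul_comm ((p:ℝ)) v, mul_comm ((q:ℝ)) v, mul_div_mul_left _ _ (ne_of_gt hvpos)]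

/-- Translation RPL(⊙) → LΠ½. -/
def RPLForm.toLPi : RPLForm → LPiForm
  | .const r => LPiForm.ofRat r.1
  | .prop p => .prop p
  | .impL φ ψ => .impL φ.toLPi ψ.toLPi
  | .conj φ ψ => .conj φ.toLPi ψ.toLPi

lemma RPLForm.toLPi_val (φ : RPLForm) (V : ℕ → ℝ) :
    φ.val V = φ.toLPi.val V := by
  induction φ with
  | const r => exact (LPiForm.ofRat_val r.1 r.2.1 r.2.2 V).symm
  | prop p => rfl
  | impL φ ψ ih1 ih2 => simp [toLPi, RPLForm.val, LPiForm.val, ih1, ih2]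
  | conj φ ψ ih1 ih2 => simp [toLPi, RPLForm.val, LPiForm.val, ih1, ih2]

lemma RPLForm.toLPi_propFree (φ : RPLForm) (h : φ.propFree) :
    φ.toLPi.propFree := by
  induction φ with
  | const r => exact LPiForm.ofRat_propFree _
  | prop p => exact absurd h (by simp [propFree])
  | impL φ ψ ih1 ih2 => exact ⟨ih1 h.1, ih2 h.2⟩
  | conj φ ψ ih1 ih2 => exact ⟨ih1 h.1, ih2 h.2⟩

lemma RPLForm.toLPi_frag {n : ℕ} {φ : RPLForm} (h : RPLForm.InFrag n φ) :
    LPiForm.InFragPF n φ.toLPi := by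
  induction h with
  | propfree hpf => exact .propfree (RPLForm.toLPi_propFree _ hpf)
  | prop p => exact .prop p
  | up _ ih => exact .up ih
  | conj _ _ hij ih1 ih2 => exact .conj ih1 ih2 hij
  | impL _ _ ih1 ih2 => exact .impL ih1 ih2

/-- RPL(⊙)_{≤n} and LΠ½(→_P⁻)_{≤n} have the same expressive power. -/
theorem RPLodot_frag_eq_LPH_frag (n : ℕ) :
    (∀ φ : RPLForm, RPLForm.InFrag n φ →
      ∃ ψ : LPiForm, LPiForm.InFragPF n ψ ∧ RLEquiv φ ψ) ∧
    (∀ ψ : LPiForm, LPiForm.InFragPF n ψ →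
      ∃ φ : RPLForm, RPLForm.InFrag n φ ∧ RLEquiv φ ψ) := by
  constructor
  · intro φ h
    exact ⟨φ.toLPi, RPLForm.toLPi_frag h, fun V _ => RPLForm.toLPi_val φ V⟩
  · intro ψ h
    obtain ⟨h1, h2⟩ := LPiForm.toRPL_frag h
    exact ⟨ψ.toRPL, h1, fun V _ => h2 V⟩
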